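/- If η > 0, then for every p ∈ [-1,1] the function q₀(τ) = cos(τ)cos(τηp) − p·sin(τ)sin(τηp) has a zero in (0, π/2]; i.e., the smallest positive zero τ₀(p) satisfies τ₀(p) ≤ π/2. -/

import Mathlib

open Real
noncomputable def q0 (η p τ : ℝ) : ℝ := Real.cos τ * Real.cos (τ*η*p) - p * Real.sin τ * Real.sin (τ*η*p)
noncomputable def q3 (η p τ : ℝ) : ℝ := Real.cos τ * Real.sin (τ*η*p) + p * Real.sin τ * Real.cos (τ*η*p)

/-!
Since `q0 η p 0 = 1`, by the intermediate value theorem it suffices to find a point of `(0, π/2]`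
where `q0 η p` is nonpositive; as `q0` is even in `p` we may take `p ≥ 0`. If `η p ≤ 2`, the point
`π/2` works, where `q0 = -p sin (π η p / 2)` and `π η p / 2 ∈ [0, π]`. Otherwise the point
`π / (η p) < π/2` works, where `q0 = -cos (π / (η p))`.
-/

open Set

lemma q0_neg_right (η p τ : ℝ) : q0 η (-p) τ = q0 η p τ := by
  simp only [q0, mul_neg, cos_neg, sin_neg]
  ring

lemma q0_at_zero (η p : ℝ) : q0 η p 0 = 1 := by
  simp [q0]

lemma continuous_q0 (η p : ℝ) : Continuous (q0 η p) := by
  unfold q0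
  fun_prop

lemma q0_pi_div_two (η p : ℝ) : q0 η p (π / 2) = -(p * sin (π / 2 * η * p)) := by
  simp [q0]

lemma q0_pi_div_mul {η p : ℝ} (h : η * p ≠ 0) : q0 η p (π / (η * p)) = -cos (π / (η * p)) := by
  have hπ : π / (η * p) * η * p = π := by rw [mul_assoc, div_mul_cancel₀ π h]
  simp [q0, hπ]

lemma exists_q0_nonpos_of_nonneg {η p : ℝ} (hη : 0 ≤ η) (hp : 0 ≤ p) :
    ∃ b ∈ Ioc 0 (π / 2), q0 η p b ≤ 0 := by
  rcases le_or_gt (η * p) 2 with h | h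
  · refine ⟨π / 2, ⟨by positivity, le_rfl⟩, ?_⟩
    have hsin : 0 ≤ sin (π / 2 * η * p) :=
      sin_nonneg_of_nonneg_of_le_pi (by positivity) (by nlinarith [pi_pos])
    rw [q0_pi_div_two]
    exact neg_nonpos.2 (mul_nonneg hp hsin)
  · have hηp : 0 < η * p := by linarith
    have hle : π / (η * p) ≤ π / 2 := div_le_div_of_nonneg_left pi_pos.le two_pos h.le
    refine ⟨π / (η * p), ⟨by positivity, hle⟩, ?_⟩
    rw [q0_pi_div_mul hηp.ne']
    exact neg_nonpos.2 (cos_nonneg_of_mem_Icc ⟨by linarith [div_pos pi_pos hηp], hle⟩)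

lemma exists_q0_nonpos {η : ℝ} (hη : 0 ≤ η) (p : ℝ) : ∃ b ∈ Ioc 0 (π / 2), q0 η p b ≤ 0 := by
  rcases le_total 0 p with hp | hp
  · exact exists_q0_nonpos_of_nonneg hη hp
  · simpa only [q0_neg_right] using exists_q0_nonpos_of_nonneg hη (neg_nonneg.2 hp)

theorem stmt7_general (η p : ℝ) (hη : η > 0) :
    ∃ τ ∈ Set.Ioc (0:ℝ) (Real.pi/2), q0 η p τ = 0 := by
  obtain ⟨b, hb, hqb⟩ := exists_q0_nonpos hη.le p
  have hzero : (0 : ℝ) ∈ Ico (q0 η p b) (q0 η p 0) := ⟨hqb, by rw [q0_at_zero]; exact one_pos⟩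
  obtain ⟨τ, hτ, hqτ⟩ := intermediate_value_Ioc' hb.1.le (continuous_q0 η p).continuousOn hzero
  exact ⟨τ, Ioc_subset_Ioc_right hb.2 hτ, hqτ⟩

theorem stmt7 (η p : ℝ) (hη : η > 0) (hp : p ∈ Set.Icc (-1:ℝ) 1) :
    ∃ τ ∈ Set.Ioc (0:ℝ) (Real.pi/2), q0 η p τ = 0 :=
  stmt7_general η p hη
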